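/- With the setup of the previous theorem (U_{ABE} = I_A ⊗ U_{BE}, dim H_A = dim H_B = n, |ψ_M⟩ = Σ_i |ii⟩): if the output state U_{ABE}|ψ_M⟩|0⟩_E is NOT E→B degradable (no TPCP map T of the form Σ_j (I_A⊗F_j)(·)(I_A⊗F_j)* sends tr_B of its projection to tr_E of its projection), then for every invertible operator W_A on H_A and |ψ⟩ = (W_A⊗I_B)|ψ_M⟩, the output state U_{ABE}|ψ⟩|0⟩_E is also not E→B degradable. -/

import Mathlib

open Matrix


open Matrix

/-- The purified output vector `U_{ABE}|ψ⟩|0⟩_E`, where `U_{ABE} = I_A ⊗ U_{BE}`. -/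
noncomputable def purify {n e : ℕ} [NeZero e]
    (U : Matrix (Fin n × Fin e) (Fin n × Fin e) ℂ) (ψ : Fin n × Fin n → ℂ) :
    Fin n × Fin n × Fin e → ℂ :=
  fun a => ∑ b : Fin n × Fin e, U a.2 b * (ψ (a.1, b.1) * (if b.2 = (0 : Fin e) then (1 : ℂ) else 0))

/-- Partial trace over `B` of the rank-one projection onto `φ`. -/
noncomputable def trB {n e : ℕ} (φ : Fin n × Fin n × Fin e → ℂ) :
    Matrix (Fin n × Fin e) (Fin n × Fin e) ℂ :=
  Matrix.of fun a b => ∑ j : Fin n, φ (a.1, j, a.2) * star (φ (b.1, j, b.2))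

/-- Partial trace over `E` of the rank-one projection onto `φ`. -/
noncomputable def trE {n e : ℕ} (φ : Fin n × Fin n × Fin e → ℂ) :
    Matrix (Fin n × Fin n) (Fin n × Fin n) ℂ :=
  Matrix.of fun a b => ∑ k : Fin e, φ (a.1, a.2, k) * star (φ (b.1, b.2, k))

/-- The map `T(X) = ∑ ℓ (I_A ⊗ F_ℓ) X (I_A ⊗ F_ℓ)ᴴ` with `F_ℓ : H_E → H_B`. -/
noncomputable def applyT {n e r : ℕ} (F : Fin r → Matrix (Fin n) (Fin e) ℂ)
    (X : Matrix (Fin n × Fin e) (Fin n × Fin e) ℂ) :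
    Matrix (Fin n × Fin n) (Fin n × Fin n) ℂ :=
  ∑ ℓ, (Matrix.kroneckerMap (· * ·) (1 : Matrix (Fin n) (Fin n) ℂ) (F ℓ)) * X *
    (Matrix.kroneckerMap (· * ·) (1 : Matrix (Fin n) (Fin n) ℂ) (F ℓ))ᴴ

/-- The (unnormalized) maximally entangled state `∑ i |ii⟩`. -/
def psiM {n : ℕ} : Fin n × Fin n → ℂ := fun a => if a.1 = a.2 then 1 else 0

/-- A tripartite pure state vector `φ` is `E → B` degradable if some Kraus family
`F_ℓ : H_E → H_B` with `∑ F_ℓᴴ F_ℓ = 1` sends `tr_B P(φ)` to `tr_E P(φ)`. -/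
def EtoBDegradable {n e : ℕ} (φ : Fin n × Fin n × Fin e → ℂ) : Prop :=
  ∃ (r : ℕ) (F : Fin r → Matrix (Fin n) (Fin e) ℂ),
    (∑ ℓ, (F ℓ)ᴴ * F ℓ = 1) ∧ applyT F (trB φ) = trE φ

/-!
`U_{ABE} = I_A ⊗ U_{BE}` commutes with `W_A ⊗ I`, so the output for `(W_A ⊗ I)|ψ_M⟩` is
`(W_A ⊗ I)` applied to the output for `|ψ_M⟩`. Both reduced states of a pure state are Gram
matrices of reshapings of the vector, so they get conjugated by `W_A ⊗ I`. A degrading map acts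
only on the `B`/`E` factor and commutes with that conjugation, which can then be cancelled
because `W_A` is invertible: a degrading map for the new output degrades the old one too.
-/

open Matrix Kronecker

lemma Matrix.isUnit_kronecker {R m p : Type*} [CommRing R] [Fintype m] [DecidableEq m]
    [Fintype p] [DecidableEq p] {A : Matrix m m R} {B : Matrix p p R}
    (hA : IsUnit A) (hB : IsUnit B) : IsUnit (A ⊗ₖ B) := by
  rw [isUnit_iff_isUnit_det] at hA hB ⊢
  rw [det_kronecker]
  exact (hA.pow _).mul (hB.pow _)

lemma Matrix.eq_of_isUnit_of_conj_eq {R m : Type*} [CommRing R] [StarRing R] [Fintype m]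
    [DecidableEq m] {A X Y : Matrix m m R} (hA : IsUnit A) (h : A * X * Aᴴ = A * Y * Aᴴ) :
    X = Y :=
  hA.mul_left_cancel (((isUnit_conjTranspose A).2 hA).mul_right_cancel h)

lemma Matrix.one_kronecker_mul_kronecker_one_comm {R l p q : Type*} [CommSemiring R]
    [Fintype l] [DecidableEq l] [Fintype p] [DecidableEq p] [Fintype q] [DecidableEq q]
    (A : Matrix l l R) (B : Matrix p q R) :
    ((1 : Matrix l l R) ⊗ₖ B) * (A ⊗ₖ (1 : Matrix q q R)) =
      (A ⊗ₖ (1 : Matrix p p R)) * ((1 : Matrix l l R) ⊗ₖ B) := by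
  rw [← mul_kronecker_mul, ← mul_kronecker_mul, Matrix.one_mul, Matrix.mul_one,
    Matrix.one_mul, Matrix.mul_one]

/-- `(W ⊗ I) φ` for a vector `φ` on `H_A ⊗ (⋯)`. -/
def actA {n : ℕ} {β : Type*} (W : Matrix (Fin n) (Fin n) ℂ) (φ : Fin n × β → ℂ) :
    Fin n × β → ℂ :=
  fun a => ∑ i, W a.1 i * φ (i, a.2)

lemma purify_actA {n e : ℕ} [NeZero e] (U : Matrix (Fin n × Fin e) (Fin n × Fin e) ℂ)
    (W : Matrix (Fin n) (Fin n) ℂ) (ψ : Fin n × Fin n → ℂ) :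
    purify U (actA W ψ) = actA W (purify U ψ) := by
  funext ⟨a, b, k⟩
  simp only [purify, actA, Finset.sum_mul, Finset.mul_sum]
  rw [Finset.sum_comm]
  refine Finset.sum_congr rfl fun c _ => Finset.sum_congr rfl fun i _ => ?_
  ring

section Reshape

variable {n e : ℕ}

def reshapeB (φ : Fin n × Fin n × Fin e → ℂ) : Matrix (Fin n × Fin e) (Fin n) ℂ :=
  Matrix.of fun a j => φ (a.1, j, a.2)

def reshapeE (φ : Fin n × Fin n × Fin e → ℂ) : Matrix (Fin n × Fin n) (Fin e) ℂ :=
  Matrix.of fun a k => φ (a.1, a.2, k)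

lemma trB_eq_reshapeB_mul_conjTranspose (φ : Fin n × Fin n × Fin e → ℂ) :
    trB φ = reshapeB φ * (reshapeB φ)ᴴ := by
  ext a b
  simp [trB, reshapeB, mul_apply]

lemma trE_eq_reshapeE_mul_conjTranspose (φ : Fin n × Fin n × Fin e → ℂ) :
    trE φ = reshapeE φ * (reshapeE φ)ᴴ := by
  ext a b
  simp [trE, reshapeE, mul_apply]

lemma reshapeB_actA (W : Matrix (Fin n) (Fin n) ℂ) (φ : Fin n × Fin n × Fin e → ℂ) :
    reshapeB (actA W φ) = (W ⊗ₖ (1 : Matrix (Fin e) (Fin e) ℂ)) * reshapeB φ := by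
  ext ⟨a, k⟩ j
  simp [reshapeB, actA, mul_apply, Fintype.sum_prod_type, one_apply]

lemma reshapeE_actA (W : Matrix (Fin n) (Fin n) ℂ) (φ : Fin n × Fin n × Fin e → ℂ) :
    reshapeE (actA W φ) = (W ⊗ₖ (1 : Matrix (Fin n) (Fin n) ℂ)) * reshapeE φ := by
  ext ⟨a, b⟩ k
  simp [reshapeE, actA, mul_apply, Fintype.sum_prod_type, one_apply]

lemma trB_actA (W : Matrix (Fin n) (Fin n) ℂ) (φ : Fin n × Fin n × Fin e → ℂ) :
    trB (actA W φ) =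
      (W ⊗ₖ (1 : Matrix (Fin e) (Fin e) ℂ)) * trB φ * (W ⊗ₖ (1 : Matrix (Fin e) (Fin e) ℂ))ᴴ := by
  rw [trB_eq_reshapeB_mul_conjTranspose, trB_eq_reshapeB_mul_conjTranspose, reshapeB_actA,
    conjTranspose_mul, Matrix.mul_assoc, Matrix.mul_assoc, Matrix.mul_assoc]

lemma trE_actA (W : Matrix (Fin n) (Fin n) ℂ) (φ : Fin n × Fin n × Fin e → ℂ) :
    trE (actA W φ) =
      (W ⊗ₖ (1 : Matrix (Fin n) (Fin n) ℂ)) * trE φ * (W ⊗ₖ (1 : Matrix (Fin n) (Fin n) ℂ))ᴴ := by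
  rw [trE_eq_reshapeE_mul_conjTranspose, trE_eq_reshapeE_mul_conjTranspose, reshapeE_actA,
    conjTranspose_mul, Matrix.mul_assoc, Matrix.mul_assoc, Matrix.mul_assoc]

end Reshape

lemma applyT_conj_kronecker_one {n e r : ℕ} (F : Fin r → Matrix (Fin n) (Fin e) ℂ)
    (W : Matrix (Fin n) (Fin n) ℂ) (X : Matrix (Fin n × Fin e) (Fin n × Fin e) ℂ) :
    applyT F ((W ⊗ₖ (1 : Matrix (Fin e) (Fin e) ℂ)) * X * (W ⊗ₖ (1 : Matrix (Fin e) (Fin e) ℂ))ᴴ) =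
      (W ⊗ₖ (1 : Matrix (Fin n) (Fin n) ℂ)) * applyT F X *
        (W ⊗ₖ (1 : Matrix (Fin n) (Fin n) ℂ))ᴴ := by
  simp only [applyT, Finset.mul_sum, Finset.sum_mul]
  refine Finset.sum_congr rfl fun ℓ _ => ?_
  set L := (1 : Matrix (Fin n) (Fin n) ℂ) ⊗ₖ F ℓ
  set G := W ⊗ₖ (1 : Matrix (Fin e) (Fin e) ℂ)
  set G' := W ⊗ₖ (1 : Matrix (Fin n) (Fin n) ℂ)
  have hcomm : L * G = G' * L := one_kronecker_mul_kronecker_one_comm W (F ℓ)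
  calc L * (G * X * Gᴴ) * Lᴴ = (L * G) * X * (L * G)ᴴ := by
        simp only [conjTranspose_mul, Matrix.mul_assoc]
    _ = G' * (L * X * Lᴴ) * G'ᴴ := by
        rw [hcomm]
        simp only [conjTranspose_mul, Matrix.mul_assoc]

lemma EtoBDegradable.of_actA {n e : ℕ} {W : Matrix (Fin n) (Fin n) ℂ}
    {φ : Fin n × Fin n × Fin e → ℂ} (hW : IsUnit W) (h : EtoBDegradable (actA W φ)) :
    EtoBDegradable φ := by
  obtain ⟨r, F, hF, hT⟩ := h
  rw [trB_actA, trE_actA, applyT_conj_kronecker_one] at hT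
  exact ⟨r, F, hF, eq_of_isUnit_of_conj_eq (isUnit_kronecker hW isUnit_one) hT⟩

theorem not_degradable_of_not_maxEntangled_general {n e : ℕ} [NeZero e]
    (U : Matrix (Fin n × Fin e) (Fin n × Fin e) ℂ)
    (hnd : ¬ EtoBDegradable (purify U psiM)) :
    ∀ W : Matrix (Fin n) (Fin n) ℂ, IsUnit W →
      ¬ EtoBDegradable (purify U (fun a => ∑ i, W a.1 i * psiM (i, a.2))) := by
  intro W hW h
  change EtoBDegradable (purify U (actA W psiM)) at h
  rw [purify_actA] at h
  exact hnd (h.of_actA hW)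

/-- Theorem 5.3: if the channel output of the maximally entangled state is
not `E → B` degradable, then neither is the output of `(W_A ⊗ I)|ψ_M⟩` for any invertible
`W_A`. -/
theorem not_degradable_of_not_maxEntangled {n e : ℕ} [NeZero e]
    (U : Matrix (Fin n × Fin e) (Fin n × Fin e) ℂ)
    (hU : U ∈ Matrix.unitaryGroup (Fin n × Fin e) ℂ)
    (hnd : ¬ EtoBDegradable (purify U psiM)) :
    ∀ W : Matrix (Fin n) (Fin n) ℂ, IsUnit W →
      ¬ EtoBDegradable (purify U (fun a => ∑ i, W a.1 i * psiM (i, a.2))) :=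
  not_degradable_of_not_maxEntangled_general U hnd
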